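/- arXiv:1402.3317 — 3 statements merged into one kernel-verified Lean document; each statement's English description precedes it below -/
import Mathlib

section
/- Suppose P⁺ is a symmetric positive definite matrix satisfying the algebraic descriptor Riccati equation P⁺ = (Eᵀ (A P⁺ Aᵀ + Q)⁻¹ E + Hᵀ R⁻¹ H)⁻¹, with Q, R symmetric positive definite and [Eᵀ Hᵀ]ᵀ full column rank. Let P⁻ = A P⁺ Aᵀ + Q and M = P⁺ Aᵀ (P⁻)⁻¹ E. Then (P⁺)⁻¹ = Mᵀ (P⁺)⁻¹ M + Q̄, where Q̄ := Eᵀ (P⁻)⁻¹ Q (P⁻)⁻¹ E + Hᵀ R⁻¹ H. -/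
open Matrix

/-!
Since `Eᵀ (P⁻)⁻¹ E = Eᵀ (P⁻)⁻¹ P⁻ (P⁻)⁻¹ E`, substituting `P⁻ = A P⁺ Aᵀ + Q` in the middle
splits the Riccati form `(P⁺)⁻¹ = Eᵀ (P⁻)⁻¹ E + Hᵀ R⁻¹ H` into `Q̄` and
`Eᵀ (P⁻)⁻¹ A P⁺ Aᵀ (P⁻)⁻¹ E`, which is `Mᵀ (P⁺)⁻¹ M` because `P⁺` and `P⁻` are symmetric.
-/

namespace Matrix

variable {α : Type*} [CommRing α] {l m n : Type*}

theorem nonsing_inv_mul_self_mul_nonsing_inv [Fintype n] [DecidableEq n] (A : Matrix n n α) :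
    A⁻¹ * A * A⁻¹ = A⁻¹ := by
  by_cases h : IsUnit A.det
  · rw [nonsing_inv_mul A h, one_mul]
  · rw [nonsing_inv_apply_not_isUnit A h, mul_zero]

theorem nonsing_inv_eq_of_eq_nonsing_inv [Fintype n] [DecidableEq n] {P S : Matrix n n α}
    (hPS : P = S⁻¹) (hP : IsUnit P.det) : P⁻¹ = S := by
  subst hPS
  exact nonsing_inv_nonsing_inv S (isUnit_nonsing_inv_det_iff.mp hP)

theorem mul_nonsing_inv_add_sandwich [Fintype l] [DecidableEq l] (B : Matrix m l α)
    (X Y : Matrix l l α) (C : Matrix l n α) :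
    B * (X + Y)⁻¹ * X * (X + Y)⁻¹ * C + B * (X + Y)⁻¹ * Y * (X + Y)⁻¹ * C =
      B * (X + Y)⁻¹ * C := by
  rw [← Matrix.add_mul, ← Matrix.add_mul, ← Matrix.mul_add, Matrix.mul_assoc B,
    Matrix.mul_assoc B, nonsing_inv_mul_self_mul_nonsing_inv]

theorem IsSymm.mul_mul_transpose [Fintype n] {P : Matrix n n α} (hP : P.IsSymm)
    (A : Matrix m n α) :
    (A * P * Aᵀ).IsSymm := by
  simp only [IsSymm, transpose_mul, transpose_transpose, hP.eq, Matrix.mul_assoc]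

theorem IsSymm.transpose_mul_self_mul_nonsing_inv_mul_self [Fintype n] [DecidableEq n]
    {P : Matrix n n α} (hP : P.IsSymm) (hdet : IsUnit P.det) (B : Matrix n m α) :
    (P * B)ᵀ * P⁻¹ * (P * B) = Bᵀ * P * B := by
  rw [transpose_mul, hP.eq, mul_nonsing_inv_cancel_right P Bᵀ hdet, Matrix.mul_assoc]

end Matrix

theorem stmt_6_general {n n₁ m : ℕ}
    (E A : Matrix (Fin n₁) (Fin n) ℝ) (H : Matrix (Fin m) (Fin n) ℝ)
    (Q : Matrix (Fin n₁) (Fin n₁) ℝ) (R : Matrix (Fin m) (Fin m) ℝ)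
    (Pp : Matrix (Fin n) (Fin n) ℝ)
    (hQ : Q.PosDef) (hPp : Pp.PosDef)
    (hriccati : Pp = (Eᵀ * (A * Pp * Aᵀ + Q)⁻¹ * E + Hᵀ * R⁻¹ * H)⁻¹) :
    Pp⁻¹ = (Pp * Aᵀ * (A * Pp * Aᵀ + Q)⁻¹ * E)ᵀ * Pp⁻¹ * (Pp * Aᵀ * (A * Pp * Aᵀ + Q)⁻¹ * E) +
      (Eᵀ * (A * Pp * Aᵀ + Q)⁻¹ * Q * (A * Pp * Aᵀ + Q)⁻¹ * E + Hᵀ * R⁻¹ * H) := by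
  set Pm := A * Pp * Aᵀ + Q
  have hPpSymm : Pp.IsSymm := isHermitian_iff_isSymm.mp hPp.isHermitian
  have hPmSymm : Pm.IsSymm :=
    (hPpSymm.mul_mul_transpose A).add (isHermitian_iff_isSymm.mp hQ.isHermitian)
  have hPpDet : IsUnit Pp.det := isUnit_iff_ne_zero.mpr hPp.det_pos.ne'
  have hM : (Pp * Aᵀ * Pm⁻¹ * E)ᵀ * Pp⁻¹ * (Pp * Aᵀ * Pm⁻¹ * E) =
      Eᵀ * Pm⁻¹ * (A * Pp * Aᵀ) * Pm⁻¹ * E := by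
    rw [show Pp * Aᵀ * Pm⁻¹ * E = Pp * (Aᵀ * Pm⁻¹ * E) by simp only [Matrix.mul_assoc],
      hPpSymm.transpose_mul_self_mul_nonsing_inv_mul_self hPpDet]
    simp only [transpose_mul, transpose_transpose, hPmSymm.inv.eq, Matrix.mul_assoc]
  rw [hM, ← add_assoc, mul_nonsing_inv_add_sandwich]
  exact nonsing_inv_eq_of_eq_nonsing_inv hriccati hPpDet

/-- Riccati-derived Lyapunov equation: if `P⁺` solves the algebraic descriptor Riccati
equation, then `(P⁺)⁻¹ = Mᵀ (P⁺)⁻¹ M + Q̄` with `M = P⁺ Aᵀ (P⁻)⁻¹ E`,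
`P⁻ = A P⁺ Aᵀ + Q`, and `Q̄ = Eᵀ (P⁻)⁻¹ Q (P⁻)⁻¹ E + Hᵀ R⁻¹ H`. -/
theorem stmt_6 {n n₁ m : ℕ}
    (E A : Matrix (Fin n₁) (Fin n) ℝ) (H : Matrix (Fin m) (Fin n) ℝ)
    (Q : Matrix (Fin n₁) (Fin n₁) ℝ) (R : Matrix (Fin m) (Fin m) ℝ)
    (Pp : Matrix (Fin n) (Fin n) ℝ)
    (hQ : Q.PosDef) (hR : R.PosDef) (hPp : Pp.PosDef)
    (hrank : (Matrix.fromRows E H).rank = n)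
    (hriccati : Pp = (Eᵀ * (A * Pp * Aᵀ + Q)⁻¹ * E + Hᵀ * R⁻¹ * H)⁻¹) :
    Pp⁻¹ = (Pp * Aᵀ * (A * Pp * Aᵀ + Q)⁻¹ * E)ᵀ * Pp⁻¹ * (Pp * Aᵀ * (A * Pp * Aᵀ + Q)⁻¹ * E) +
      (Eᵀ * (A * Pp * Aᵀ + Q)⁻¹ * Q * (A * Pp * Aᵀ + Q)⁻¹ * E + Hᵀ * R⁻¹ * H) :=
  stmt_6_general E A H Q R Pp hQ hPp hriccati
end

section
/- Let E, A ∈ ℝ^{n₁×n}, H ∈ ℝ^{m×n}, with Q ∈ ℝ^{n₁×n₁}, R ∈ ℝ^{m×m} symmetric positive definite, and [Eᵀ Hᵀ]ᵀ full column rank. Suppose P∞⁺ is a symmetric positive definite solution of the algebraic descriptor Riccati equation P∞⁺ = (Eᵀ (A P∞⁺ Aᵀ + Q)⁻¹ E + Hᵀ R⁻¹ H)⁻¹. Then the matrix M := ((P∞⁺)⁻¹ + Aᵀ Q⁻¹ A)⁻¹ Aᵀ Q⁻¹ E has spectral radius strictly less than 1. -/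
/-!
With `P⁻ = A P Aᵀ + Q`, the Riccati equation says `P⁻¹ = Eᵀ (P⁻)⁻¹ E + Hᵀ R⁻¹ H`, and the
push-through identity `(P⁻¹ + Aᵀ Q⁻¹ A)⁻¹ Aᵀ Q⁻¹ = P Aᵀ (P⁻)⁻¹` rewrites `M` as `P Aᵀ (P⁻)⁻¹ E`.
Substituting `A P Aᵀ = P⁻ - Q` gives the discrete Lyapunov equation `P⁻¹ = Mᵀ P⁻¹ M + Q̄` with
`Q̄ = Eᵀ (P⁻)⁻¹ Q (P⁻)⁻¹ E + Hᵀ R⁻¹ H` positive definite, and evaluating it at an eigenvector of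
`M` shows that every eigenvalue lies in the open unit disc.
-/

open Matrix
open scoped ComplexOrder

namespace Matrix

variable {n k l : Type*} [Fintype n] [Fintype k] [Fintype l]

theorem star_dotProduct_conjTranspose_mul_mul_mulVec {R : Type*} [CommRing R] [StarRing R]
    (A : Matrix k k R) (C : Matrix k n R) (x : n → R) :
    star x ⬝ᵥ (Cᴴ * A * C) *ᵥ x = star (C *ᵥ x) ⬝ᵥ A *ᵥ (C *ᵥ x) := by
  simp only [star_mulVec, dotProduct_mulVec, vecMul_vecMul]

theorem PosDef.conjTranspose_mul_mul_add_conjTranspose_mul_mul {R : Type*} [CommRing R]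
    [PartialOrder R] [StarRing R] [IsOrderedAddMonoid R] {A : Matrix k k R} {B : Matrix l l R}
    (hA : A.PosDef) (hB : B.PosDef) {C : Matrix k n R} {D : Matrix l n R}
    (hCD : ∀ x, C *ᵥ x = 0 → D *ᵥ x = 0 → x = 0) : (Cᴴ * A * C + Dᴴ * B * D).PosDef := by
  refine .of_dotProduct_mulVec_pos ((isHermitian_conjTranspose_mul_mul C hA.1).add
    (isHermitian_conjTranspose_mul_mul D hB.1)) fun x hx => ?_
  rw [add_mulVec, dotProduct_add, star_dotProduct_conjTranspose_mul_mul_mulVec,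
    star_dotProduct_conjTranspose_mul_mul_mulVec]
  by_cases hCx : C *ᵥ x = 0
  · have hDx : D *ᵥ x ≠ 0 := fun hDx => hx (hCD x hCx hDx)
    simpa [hCx] using hB.dotProduct_mulVec_pos hDx
  · exact add_pos_of_pos_of_nonneg (hA.dotProduct_mulVec_pos hCx)
      (hB.posSemidef.dotProduct_mulVec_nonneg _)

variable [DecidableEq n] [DecidableEq k]

section Riccati

variable {K : Type*} [CommRing K]

theorem inv_add_mul_inv_mul_inv_mul_mul_inv {P : Matrix n n K} {Q : Matrix k k K}
    (B : Matrix n k K) (C : Matrix k n K) (hP : IsUnit P) (hQ : IsUnit Q)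
    (hT : IsUnit (P⁻¹ + B * Q⁻¹ * C)) (hS : IsUnit (C * P * B + Q)) :
    (P⁻¹ + B * Q⁻¹ * C)⁻¹ * B * Q⁻¹ = P * B * (C * P * B + Q)⁻¹ := by
  rw [isUnit_iff_isUnit_det] at hP hQ hT hS
  have key : (P⁻¹ + B * Q⁻¹ * C) * (P * B) = B * Q⁻¹ * (C * P * B + Q) := by
    simp only [Matrix.add_mul, Matrix.mul_add, Matrix.mul_assoc,
      nonsing_inv_mul_cancel_left _ _ hP, nonsing_inv_mul _ hQ, Matrix.mul_one]
    abel
  calc (P⁻¹ + B * Q⁻¹ * C)⁻¹ * B * Q⁻¹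
      = (P⁻¹ + B * Q⁻¹ * C)⁻¹ * (B * Q⁻¹ * (C * P * B + Q)) * (C * P * B + Q)⁻¹ := by
        rw [Matrix.mul_assoc _ (B * Q⁻¹ * _), mul_nonsing_inv_cancel_right _ _ hS,
          Matrix.mul_assoc]
    _ = P * B * (C * P * B + Q)⁻¹ := by rw [← key, nonsing_inv_mul_cancel_left _ _ hT]

theorem transpose_mul_inv_mul_eq_sub {P : Matrix n n K} (A E : Matrix k n K) {Q : Matrix k k K}
    (hP : P.IsSymm) (hQ : Q.IsSymm) (hPu : IsUnit P) (hS : IsUnit (A * P * Aᵀ + Q)) :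
    (P * Aᵀ * (A * P * Aᵀ + Q)⁻¹ * E)ᵀ * P⁻¹ * (P * Aᵀ * (A * P * Aᵀ + Q)⁻¹ * E) =
      Eᵀ * (A * P * Aᵀ + Q)⁻¹ * E -
        ((A * P * Aᵀ + Q)⁻¹ * E)ᵀ * Q * ((A * P * Aᵀ + Q)⁻¹ * E) := by
  rw [isUnit_iff_isUnit_det] at hPu hS
  set S := A * P * Aᵀ + Q with hS_def
  have hNsymm : S⁻¹ᵀ = S⁻¹ := by
    rw [transpose_nonsing_inv, hS_def, transpose_add, transpose_mul, transpose_mul, hP.eq, hQ.eq,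
      transpose_transpose, Matrix.mul_assoc]
  calc (P * Aᵀ * S⁻¹ * E)ᵀ * P⁻¹ * (P * Aᵀ * S⁻¹ * E)
      = Eᵀ * S⁻¹ * (A * P * Aᵀ) * S⁻¹ * E := by
        simp only [transpose_mul, transpose_transpose, hNsymm, hP.eq, Matrix.mul_assoc,
          nonsing_inv_mul_cancel_left _ _ hPu]
    _ = Eᵀ * S⁻¹ * (S - Q) * S⁻¹ * E := by rw [hS_def, add_sub_cancel_right]
    _ = Eᵀ * S⁻¹ * E - (S⁻¹ * E)ᵀ * Q * (S⁻¹ * E) := by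
        simp only [transpose_mul, hNsymm, Matrix.mul_sub, Matrix.sub_mul, Matrix.mul_assoc,
          mul_nonsing_inv_cancel_left _ _ hS]

end Riccati

section Lyapunov

variable {𝕜 : Type*} [RCLike 𝕜]

theorem PosDef.map_algebraMap {B : Matrix n n ℝ} (hB : B.PosDef) :
    (B.map (algebraMap ℝ 𝕜)).PosDef := by
  open scoped MatrixOrder in
  obtain ⟨C, rfl⟩ := CStarAlgebra.nonneg_iff_eq_star_mul_self.mp hB.posSemidef.nonneg
  have hpsd : ((star C * C).map (algebraMap ℝ 𝕜)).PosSemidef := by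
    rw [Matrix.map_mul, star_eq_conjTranspose, conjTranspose_map _ fun _ => by simp]
    exact posSemidef_conjTranspose_mul_self _
  exact hpsd.posDef_iff_isUnit.mpr (hB.isUnit.map (algebraMap ℝ 𝕜).mapMatrix)

theorem exists_mulVec_eq_smul_of_mem_spectrum {K : Type*} [Field K] {M : Matrix n n K} {μ : K}
    (hμ : μ ∈ spectrum K M) : ∃ v ≠ 0, M *ᵥ v = μ • v := by
  rw [← spectrum_toLin', ← Module.End.hasEigenvalue_iff_mem_spectrum] at hμ
  obtain ⟨v, hv⟩ := hμ.exists_hasEigenvector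
  exact ⟨v, hv.2, by simpa using hv.apply_eq_smul⟩

theorem norm_lt_one_of_mem_spectrum_of_lyapunov {P M Q : Matrix n n 𝕜} (hP : P.PosDef)
    (hQ : Q.PosDef) (hlyap : P = Mᴴ * P * M + Q) {μ : 𝕜} (hμ : μ ∈ spectrum 𝕜 M) : ‖μ‖ < 1 := by
  obtain ⟨v, hv, hMv⟩ := exists_mulVec_eq_smul_of_mem_spectrum hμ
  have hquad : star v ⬝ᵥ P *ᵥ v
      = (‖μ‖ ^ 2 : 𝕜) * (star v ⬝ᵥ P *ᵥ v) + star v ⬝ᵥ Q *ᵥ v := by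
    conv_lhs => rw [hlyap]
    rw [add_mulVec, dotProduct_add, star_dotProduct_conjTranspose_mul_mul_mulVec, hMv, star_smul,
      smul_dotProduct, mulVec_smul, dotProduct_smul, smul_eq_mul, smul_eq_mul, ← mul_assoc,
      RCLike.star_def, RCLike.conj_mul]
  have hPv := hP.re_dotProduct_pos hv
  have hQv := hQ.re_dotProduct_pos hv
  have hre := congrArg RCLike.re hquad
  rw [map_add, ← RCLike.ofReal_pow, RCLike.re_ofReal_mul] at hre
  exact (sq_lt_one_iff₀ (norm_nonneg μ)).mp (by nlinarith)

theorem norm_lt_one_of_mem_spectrum_map_of_lyapunov {P M Q : Matrix n n ℝ} (hP : P.PosDef)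
    (hQ : Q.PosDef) (hlyap : P = Mᵀ * P * M + Q) {μ : 𝕜}
    (hμ : μ ∈ spectrum 𝕜 (M.map (algebraMap ℝ 𝕜))) : ‖μ‖ < 1 := by
  refine norm_lt_one_of_mem_spectrum_of_lyapunov hP.map_algebraMap hQ.map_algebraMap ?_ hμ
  rw [← conjTranspose_map _ fun _ => by simp, conjTranspose_eq_transpose_of_trivial]
  simpa only [map_add, map_mul, RingHom.mapMatrix_apply] using
    congrArg (algebraMap ℝ 𝕜).mapMatrix hlyap

end Lyapunov

end Matrix

theorem stmt_9_general {n n₁ m : ℕ}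
    (E A : Matrix (Fin n₁) (Fin n) ℝ) (H : Matrix (Fin m) (Fin n) ℝ)
    (Q : Matrix (Fin n₁) (Fin n₁) ℝ) (R : Matrix (Fin m) (Fin m) ℝ)
    (Pp : Matrix (Fin n) (Fin n) ℝ)
    (hQ : Q.PosDef) (hR : R.PosDef) (hPp : Pp.PosDef)
    (hriccati : Pp = (Eᵀ * (A * Pp * Aᵀ + Q)⁻¹ * E + Hᵀ * R⁻¹ * H)⁻¹) :
    ∀ μ ∈ spectrum ℂ
      (((Pp⁻¹ + Aᵀ * Q⁻¹ * A)⁻¹ * Aᵀ * Q⁻¹ * E).map (algebraMap ℝ ℂ)), ‖μ‖ < 1 := by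
  have hPm : (A * Pp * Aᵀ + Q).PosDef := by
    simpa only [conjTranspose_eq_transpose_of_trivial] using
      PosDef.posSemidef_add (hPp.posSemidef.mul_mul_conjTranspose_same A) hQ
  have hT : (Pp⁻¹ + Aᵀ * Q⁻¹ * A).PosDef := by
    simpa only [conjTranspose_eq_transpose_of_trivial, transpose_transpose] using
      hPp.inv.add_posSemidef (hQ.inv.posSemidef.conjTranspose_mul_mul_same A)
  have hM : (Pp⁻¹ + Aᵀ * Q⁻¹ * A)⁻¹ * Aᵀ * Q⁻¹ * E = Pp * Aᵀ * (A * Pp * Aᵀ + Q)⁻¹ * E := by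
    rw [inv_add_mul_inv_mul_inv_mul_mul_inv Aᵀ A hPp.isUnit hQ.isUnit hT.isUnit hPm.isUnit]
  set N := (A * Pp * Aᵀ + Q)⁻¹
  have hPinv : Pp⁻¹ = Eᵀ * N * E + Hᵀ * R⁻¹ * H := by
    rw [hriccati, nonsing_inv_nonsing_inv]
    rw [← isUnit_nonsing_inv_det_iff, ← hriccati, ← isUnit_iff_isUnit_det]
    exact hPp.isUnit
  -- `Pp⁻¹ = Eᵀ N E + Hᵀ R⁻¹ H` is invertible, so `N E` and `H` have no common kernel vector.
  have hQbar : ((N * E)ᵀ * Q * (N * E) + Hᵀ * R⁻¹ * H).PosDef := by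
    simpa only [conjTranspose_eq_transpose_of_trivial] using
      hQ.conjTranspose_mul_mul_add_conjTranspose_mul_mul hR.inv fun x hNEx hHx => by
        apply (mulVec_injective_iff_isUnit.mpr hPp.inv.isUnit).eq_iff' (mulVec_zero _) |>.mp
        rw [hPinv, add_mulVec, Matrix.mul_assoc Eᵀ, ← mulVec_mulVec, hNEx, ← mulVec_mulVec, hHx,
          mulVec_zero, mulVec_zero, add_zero]
  have hlyap : Pp⁻¹ = (Pp * Aᵀ * N * E)ᵀ * Pp⁻¹ * (Pp * Aᵀ * N * E) +
      ((N * E)ᵀ * Q * (N * E) + Hᵀ * R⁻¹ * H) := by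
    rw [transpose_mul_inv_mul_eq_sub A E (isHermitian_iff_isSymm.mp hPp.1)
      (isHermitian_iff_isSymm.mp hQ.1) hPp.isUnit hPm.isUnit]
    conv_lhs => rw [hPinv]
    abel
  rw [hM]
  exact fun μ hμ => norm_lt_one_of_mem_spectrum_map_of_lyapunov hPp.inv hQbar hlyap hμ

/-- Stability of the smoother coupling matrix: if `P∞⁺` is a symmetric positive definite
solution of the algebraic descriptor Riccati equation, then
`M = ((P∞⁺)⁻¹ + Aᵀ Q⁻¹ A)⁻¹ Aᵀ Q⁻¹ E` has spectral radius `< 1`. -/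
theorem stmt_9 {n n₁ m : ℕ}
    (E A : Matrix (Fin n₁) (Fin n) ℝ) (H : Matrix (Fin m) (Fin n) ℝ)
    (Q : Matrix (Fin n₁) (Fin n₁) ℝ) (R : Matrix (Fin m) (Fin m) ℝ)
    (Pp : Matrix (Fin n) (Fin n) ℝ)
    (hQ : Q.PosDef) (hR : R.PosDef) (hPp : Pp.PosDef)
    (hrank : (Matrix.fromRows E H).rank = n)
    (hriccati : Pp = (Eᵀ * (A * Pp * Aᵀ + Q)⁻¹ * E + Hᵀ * R⁻¹ * H)⁻¹) :
    ∀ μ ∈ spectrum ℂ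
      (((Pp⁻¹ + Aᵀ * Q⁻¹ * A)⁻¹ * Aᵀ * Q⁻¹ * E).map (algebraMap ℝ ℂ)), ‖μ‖ < 1 :=
  stmt_9_general E A H Q R Pp hQ hR hPp hriccati
end

section
/- Let P∞⁺ be a symmetric positive definite fixed point of the descriptor Riccati equation as above, and set P∞⁻ = A P∞⁺ Aᵀ + Q, L = P∞⁺ Eᵀ (P∞⁻)⁻¹, K = P∞⁺ Hᵀ R⁻¹. Then P∞⁺ = (LA) P∞⁺ (LA)ᵀ + L Q Lᵀ + K R Kᵀ. -/
/-!
Writing `S = A P Aᵀ + Q`, the first two terms combine to `L S Lᵀ = P Eᵀ S⁻¹ E P` and the last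
to `P Hᵀ R⁻¹ H P`, so the right-hand side is `P M P` with `M = Eᵀ S⁻¹ E + Hᵀ R⁻¹ H`. The Riccati
equation says `P = M⁻¹`, and `M⁻¹ M M⁻¹ = M⁻¹`.
-/

open Matrix

namespace Matrix

variable {ι ι' κ R : Type*} [Fintype ι] [Fintype ι'] [CommRing R]

theorem IsSymm.mul_mul_transpose_s10 {A : Matrix ι ι R} (hA : A.IsSymm) (B : Matrix κ ι R) :
    (B * A * Bᵀ).IsSymm := by
  simp only [IsSymm, transpose_mul, transpose_transpose, hA.eq, Matrix.mul_assoc]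

theorem mul_mul_transpose_add_mul_mul_transpose (X : Matrix κ ι R) (A : Matrix ι ι' R)
    (P : Matrix ι' ι' R) (Q : Matrix ι ι R) :
    (X * A) * P * (X * A)ᵀ + X * Q * Xᵀ = X * (A * P * Aᵀ + Q) * Xᵀ := by
  simp only [transpose_mul, Matrix.mul_add, Matrix.add_mul, Matrix.mul_assoc]

variable [DecidableEq ι]

/-- Also true for singular `A`, where `A⁻¹ = 0`. -/
theorem nonsing_inv_mul_mul_nonsing_inv (A : Matrix ι ι R) : A⁻¹ * A * A⁻¹ = A⁻¹ := by
  by_cases h : IsUnit A.det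
  · rw [nonsing_inv_mul A h, Matrix.one_mul]
  · simp [nonsing_inv_apply_not_isUnit A h]

theorem IsSymm.mul_nonsing_inv_mul_mul_transpose {S : Matrix ι ι R} (hS : S.IsSymm)
    (X : Matrix κ ι R) : X * S⁻¹ * S * (X * S⁻¹)ᵀ = X * S⁻¹ * Xᵀ := by
  rw [transpose_mul, hS.inv.eq]
  calc X * S⁻¹ * S * (S⁻¹ * Xᵀ) = X * (S⁻¹ * S * S⁻¹) * Xᵀ := by simp only [Matrix.mul_assoc]
    _ = X * S⁻¹ * Xᵀ := by rw [nonsing_inv_mul_mul_nonsing_inv]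

end Matrix

theorem stmt_10_general {n n₁ m : ℕ}
    (E A : Matrix (Fin n₁) (Fin n) ℝ) (H : Matrix (Fin m) (Fin n) ℝ)
    (Q : Matrix (Fin n₁) (Fin n₁) ℝ) (R : Matrix (Fin m) (Fin m) ℝ)
    (Pp : Matrix (Fin n) (Fin n) ℝ)
    (hQ : Q.PosDef) (hR : R.PosDef) (hPp : Pp.PosDef)
    (hriccati : Pp = (Eᵀ * (A * Pp * Aᵀ + Q)⁻¹ * E + Hᵀ * R⁻¹ * H)⁻¹) :
    Pp = (Pp * Eᵀ * (A * Pp * Aᵀ + Q)⁻¹ * A) * Pp * (Pp * Eᵀ * (A * Pp * Aᵀ + Q)⁻¹ * A)ᵀ +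
      (Pp * Eᵀ * (A * Pp * Aᵀ + Q)⁻¹) * Q * (Pp * Eᵀ * (A * Pp * Aᵀ + Q)⁻¹)ᵀ +
      (Pp * Hᵀ * R⁻¹) * R * (Pp * Hᵀ * R⁻¹)ᵀ := by
  set S := A * Pp * Aᵀ + Q
  set M := Eᵀ * S⁻¹ * E + Hᵀ * R⁻¹ * H
  have hP : Pp.IsSymm := isHermitian_iff_isSymm.mp hPp.isHermitian
  have hS : S.IsSymm := (hP.mul_mul_transpose_s10 A).add (isHermitian_iff_isSymm.mp hQ.isHermitian)
  have hRs : R.IsSymm := isHermitian_iff_isSymm.mp hR.isHermitian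
  have hL : (Pp * Eᵀ * S⁻¹ * A) * Pp * (Pp * Eᵀ * S⁻¹ * A)ᵀ + (Pp * Eᵀ * S⁻¹) * Q *
      (Pp * Eᵀ * S⁻¹)ᵀ = Pp * (Eᵀ * S⁻¹ * E) * Pp := by
    rw [mul_mul_transpose_add_mul_mul_transpose, hS.mul_nonsing_inv_mul_mul_transpose]
    simp only [transpose_mul, hP.eq, transpose_transpose, Matrix.mul_assoc]
  have hK : (Pp * Hᵀ * R⁻¹) * R * (Pp * Hᵀ * R⁻¹)ᵀ = Pp * (Hᵀ * R⁻¹ * H) * Pp := by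
    rw [hRs.mul_nonsing_inv_mul_mul_transpose]
    simp only [transpose_mul, hP.eq, transpose_transpose, Matrix.mul_assoc]
  rw [hL, hK, ← Matrix.add_mul, ← Matrix.mul_add]
  calc Pp = M⁻¹ * M * M⁻¹ := by rw [nonsing_inv_mul_mul_nonsing_inv]; exact hriccati
    _ = Pp * M * Pp := by rw [← hriccati]

/-- Steady-state Kalman filter Lyapunov form of the descriptor Riccati equation:
with `P∞⁻ = A P∞⁺ Aᵀ + Q`, `L = P∞⁺ Eᵀ (P∞⁻)⁻¹`, `K = P∞⁺ Hᵀ R⁻¹`, one has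
`P∞⁺ = (LA) P∞⁺ (LA)ᵀ + L Q Lᵀ + K R Kᵀ`. -/
theorem stmt_10 {n n₁ m : ℕ}
    (E A : Matrix (Fin n₁) (Fin n) ℝ) (H : Matrix (Fin m) (Fin n) ℝ)
    (Q : Matrix (Fin n₁) (Fin n₁) ℝ) (R : Matrix (Fin m) (Fin m) ℝ)
    (Pp : Matrix (Fin n) (Fin n) ℝ)
    (hQ : Q.PosDef) (hR : R.PosDef) (hPp : Pp.PosDef)
    (hrank : (Matrix.fromRows E H).rank = n)
    (hriccati : Pp = (Eᵀ * (A * Pp * Aᵀ + Q)⁻¹ * E + Hᵀ * R⁻¹ * H)⁻¹) :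
    Pp = (Pp * Eᵀ * (A * Pp * Aᵀ + Q)⁻¹ * A) * Pp * (Pp * Eᵀ * (A * Pp * Aᵀ + Q)⁻¹ * A)ᵀ +
      (Pp * Eᵀ * (A * Pp * Aᵀ + Q)⁻¹) * Q * (Pp * Eᵀ * (A * Pp * Aᵀ + Q)⁻¹)ᵀ +
      (Pp * Hᵀ * R⁻¹) * R * (Pp * Hᵀ * R⁻¹)ᵀ :=
  stmt_10_general E A H Q R Pp hQ hR hPp hriccati
end
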